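/- If the broken ray transform is injective on continuous compactly supported functions in every planar cone with the two boundary rays reflecting, then the broken ray transform is injective on the unit square [0,1]² with set of tomography E consisting of two adjacent sides and reflecting set R the other two adjacent sides. -/

import Mathlib

open MeasureTheory

/-- The closed planar cone with vertex `p` and angular sector `[φ, ψ]`. -/
noncomputable def coneSet2 (p : ℂ) (φ ψ : ℝ) : Set ℂ :=
  {z | ∃ r θ : ℝ, 0 ≤ r ∧ φ ≤ θ ∧ θ ≤ ψ ∧ z = p + r * Complex.exp (θ * Complex.I)}

/-- A complete (maximal) broken ray in the cone `coneSet2 p φ ψ`: it comes in from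
infinity along the ray `t ↦ x 1 + t • d 0` (`t ≤ 0`), reflects at the vertices
`x 1, …, x N` which lie on the two boundary rays of the cone (reflection across the
ray of angle `θ₀` through `p` being `v ↦ e^{2iθ₀} conj v`), travels in straight
segments inside the cone between consecutive reflections, and escapes to infinity
along `t ↦ x N + t • d N` (`t ≥ 0`). -/
noncomputable def IsConeBRMax (p : ℂ) (φ ψ : ℝ) (N : ℕ) (x d : ℕ → ℂ) : Prop :=
  1 ≤ N ∧ (∀ i ≤ N, ‖d i‖ = 1) ∧
  (∀ i, 1 ≤ i → i < N → ∃ L : ℝ, 0 < L ∧ x (i + 1) = x i + (L : ℂ) * d i) ∧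
  (∀ t : ℝ, t ≤ 0 → x 1 + (t : ℂ) * d 0 ∈ coneSet2 p φ ψ) ∧
  (∀ t : ℝ, 0 ≤ t → x N + (t : ℂ) * d N ∈ coneSet2 p φ ψ) ∧
  (∀ i, 1 ≤ i → i < N → ∀ t ∈ Set.Icc (0 : ℝ) 1,
    x i + (t : ℂ) * (x (i + 1) - x i) ∈ coneSet2 p φ ψ) ∧
  (∀ i, 1 ≤ i → i ≤ N →
    ((∃ r : ℝ, 0 < r ∧ x i = p + (r : ℂ) * Complex.exp (φ * Complex.I)) ∧
        d i = Complex.exp (2 * φ * Complex.I) * starRingEnd ℂ (d (i - 1))) ∨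
    ((∃ r : ℝ, 0 < r ∧ x i = p + (r : ℂ) * Complex.exp (ψ * Complex.I)) ∧
        d i = Complex.exp (2 * ψ * Complex.I) * starRingEnd ℂ (d (i - 1))))

/-- The integral of a compactly supported function over a maximal broken ray. -/
noncomputable def brtMax (f : ℂ → ℝ) (N : ℕ) (x d : ℕ → ℂ) : ℝ :=
  (∫ t in Set.Iic (0 : ℝ), f (x 1 + (t : ℂ) * d 0)) +
    (∑ i ∈ Finset.Ico 1 N,
      ‖x (i + 1) - x i‖ * ∫ t in (0 : ℝ)..1, f (x i + (t : ℂ) * (x (i + 1) - x i))) +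
    ∫ t in Set.Ici (0 : ℝ), f (x N + (t : ℂ) * d N)

/-- The closed unit square, as a subset of ℂ. -/
def sqSet : Set ℂ := {z | z.re ∈ Set.Icc (0 : ℝ) 1 ∧ z.im ∈ Set.Icc (0 : ℝ) 1}

/-- The set of tomography of the square: the two adjacent sides `{re = 0}` and `{im = 0}`. -/
def sqE : Set ℂ := {z ∈ sqSet | z.re = 0 ∨ z.im = 0}

/-- A broken ray in the unit square with endpoints on the two sides `sqE` and
reflections on the two opposite sides `{re = 1}` and `{im = 1}` (reflection across a
vertical line is `v ↦ -conj v`, across a horizontal line `v ↦ conj v`). -/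
noncomputable def IsSquareBR (N : ℕ) (x : ℕ → ℂ) : Prop :=
  1 ≤ N ∧ (∀ i < N, x i ≠ x (i + 1)) ∧
  (∀ i < N, ∀ t ∈ Set.Icc (0 : ℝ) 1, x i + (t : ℂ) * (x (i + 1) - x i) ∈ sqSet) ∧
  x 0 ∈ sqE ∧ x N ∈ sqE ∧
  ∀ i, i + 2 ≤ N →
    ((x (i + 1)).re = 1 ∧
        (‖x (i + 2) - x (i + 1)‖ : ℂ)⁻¹ * (x (i + 2) - x (i + 1)) =
          -starRingEnd ℂ ((‖x (i + 1) - x i‖ : ℂ)⁻¹ * (x (i + 1) - x i))) ∨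
    ((x (i + 1)).im = 1 ∧
        (‖x (i + 2) - x (i + 1)‖ : ℂ)⁻¹ * (x (i + 2) - x (i + 1)) =
          starRingEnd ℂ ((‖x (i + 1) - x i‖ : ℂ)⁻¹ * (x (i + 1) - x i)))

/-- The integral of `f` over a polygonal curve with respect to arc length. -/
noncomputable def brtSumC (f : ℂ → ℝ) (N : ℕ) (x : ℕ → ℂ) : ℝ :=
  ∑ i ∈ Finset.range N,
    ‖x (i + 1) - x i‖ * ∫ t in (0 : ℝ)..1, f (x i + (t : ℂ) * (x (i + 1) - x i))


namespace Stmt10Aux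

open Complex Real Set

lemma mem_sqSet_iff {z : ℂ} :
    z ∈ sqSet ↔ 0 ≤ z.re ∧ z.re ≤ 1 ∧ 0 ≤ z.im ∧ z.im ≤ 1 := by
  simp [sqSet, Set.mem_Icc]; tauto

lemma mem_cone_iff {z : ℂ} :
    z ∈ coneSet2 (1 + Complex.I) Real.pi (3 * Real.pi / 2) ↔ z.re ≤ 1 ∧ z.im ≤ 1 := by
  constructor
  · rintro ⟨r, θ, hr, hθ1, hθ2, rfl⟩
    have hcos : Real.cos θ ≤ 0 :=
      Real.cos_nonpos_of_pi_div_two_le_of_le (by linarith [Real.pi_pos]) (by linarith)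
    have hsin : Real.sin θ ≤ 0 := by
      have h := Real.sin_add_pi (θ - Real.pi)
      have : Real.sin (θ - Real.pi) ≥ 0 :=
        Real.sin_nonneg_of_nonneg_of_le_pi (by linarith) (by linarith)
      simp only [sub_add_cancel] at h
      linarith
    constructor
    · have : ((1 : ℂ) + Complex.I + r * Complex.exp (θ * Complex.I)).re
        = 1 + r * Real.cos θ := by
        simp [Complex.add_re, Complex.mul_re, Complex.exp_ofReal_mul_I_re,
          Complex.exp_ofReal_mul_I_im]
      rw [this]
      nlinarith
    · have : ((1 : ℂ) + Complex.I + r * Complex.exp (θ * Complex.I)).im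
        = 1 + r * Real.sin θ := by
        simp [Complex.add_im, Complex.mul_im, Complex.exp_ofReal_mul_I_re,
          Complex.exp_ofReal_mul_I_im]
      rw [this]
      nlinarith
  · rintro ⟨h1, h2⟩
    set u : ℂ := (1 + Complex.I) - z with hu
    have hure : 0 ≤ u.re := by simp [hu]; linarith
    have huim : 0 ≤ u.im := by simp [hu]; linarith
    by_cases h0 : u = 0
    · refine ⟨0, Real.pi, le_refl _, le_refl _, by linarith [Real.pi_pos], ?_⟩
      have : z = 1 + Complex.I := by
        have := h0; rw [hu] at this; by_contra hc; exact hc (by linear_combination -h0)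
      simp [this]
    · refine ⟨‖u‖, Complex.arg u + Real.pi, (norm_nonneg u), ?_, ?_, ?_⟩
      · have := Complex.arg_nonneg_iff.mpr huim; linarith
      · have : Complex.arg u ≤ Real.pi / 2 :=
          Complex.arg_le_pi_div_two_iff.mpr (Or.inl hure)
        linarith
      · have key : (↑‖u‖ : ℂ) * Complex.exp (↑(Complex.arg u) * Complex.I) = u :=
          Complex.norm_mul_exp_arg_mul_I u
        have : Complex.exp (↑(Complex.arg u + Real.pi) * Complex.I)
            = - Complex.exp (↑(Complex.arg u) * Complex.I) := by
          rw [show (↑(Complex.arg u + Real.pi) : ℂ) * Complex.I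
              = ↑(Complex.arg u) * Complex.I + ↑Real.pi * Complex.I by push_cast; ring]
          rw [Complex.exp_add, Complex.exp_pi_mul_I]
          ring
        rw [this]
        rw [mul_neg, key, hu]
        ring


variable {f : ℂ → ℝ}

lemma sq_bound {z : ℂ} (h : 0 ≤ z.re ∧ z.re ≤ 1 ∧ 0 ≤ z.im ∧ z.im ≤ 1) : ‖z‖ ≤ 2 := by
  have := Complex.norm_le_abs_re_add_abs_im z
  have h1 : |z.re| ≤ 1 := abs_le.mpr ⟨by linarith [h.1], h.2.1⟩
  have h2 : |z.im| ≤ 1 := abs_le.mpr ⟨by linarith [h.2.2.1], h.2.2.2⟩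
  calc ‖z‖ = ‖z‖ := rfl
  _ ≤ |z.re| + |z.im| := this
  _ ≤ 2 := by linarith

lemma lineIntegrable (hf : Continuous f)
    (hb : ∀ z, f z ≠ 0 → ‖z‖ ≤ 2) (x d : ℂ) (hd : ‖d‖ = 1) :
    Integrable (fun t : ℝ => f (x + t * d)) := by
  apply Continuous.integrable_of_hasCompactSupport
  · exact hf.comp (by continuity)
  · apply HasCompactSupport.intro (isCompact_Icc (a := -(2 + ‖x‖)) (b := 2 + ‖x‖))
    intro t ht
    by_contra hne
    have h2 : ‖x + ↑t * d‖ ≤ 2 := hb _ hne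
    have : ‖(t : ℂ) * d‖ ≤ ‖x + ↑t * d‖ + ‖x‖ := by
      calc ‖(t : ℂ) * d‖ = ‖x + ↑t * d - x‖ := by ring_nf
      _ ≤ ‖x + ↑t * d‖ + ‖x‖ := norm_sub_le _ _
    rw [norm_mul, Complex.norm_real, hd, mul_one, Real.norm_eq_abs] at this
    have habs : |t| ≤ 2 + ‖x‖ := by linarith
    simp only [Set.mem_Icc, not_and_or, not_le] at ht
    rcases ht with h | h
    · linarith [neg_abs_le t]
    · linarith [le_abs_self t]

lemma integral_Iic_trunc {g : ℝ → ℝ} (hg : Integrable g) {a : ℝ} (ha : a ≤ 0)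
    (h0 : ∀ t < a, g t = 0) : ∫ t in Set.Iic (0:ℝ), g t = ∫ t in a..(0:ℝ), g t := by
  have h1 : ∫ t in Set.Iic a, g t = 0 := by
    rw [integral_Iic_eq_integral_Iio]
    exact setIntegral_eq_zero_of_forall_eq_zero fun t ht => h0 t ht
  have h2 := intervalIntegral.integral_Iic_sub_Iic (hg.integrableOn (s := Set.Iic a))
    (hg.integrableOn (s := Set.Iic (0:ℝ)))
  rw [← h2, h1, sub_zero]

lemma integral_Ici_trunc {g : ℝ → ℝ} (hg : Integrable g) {b : ℝ} (hb : 0 ≤ b)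
    (h0 : ∀ t > b, g t = 0) : ∫ t in Set.Ici (0:ℝ), g t = ∫ t in (0:ℝ)..b, g t := by
  have hset : Set.Icc (0:ℝ) b ∪ Set.Ioi b = Set.Ici 0 := by
    ext t; simp only [Set.mem_union, Set.mem_Icc, Set.mem_Ioi, Set.mem_Ici]
    constructor
    · rintro (⟨h, _⟩ | h) <;> linarith
    · intro h; rcases le_or_gt t b with h' | h'
      · exact Or.inl ⟨h, h'⟩
      · exact Or.inr h'
  have hdisj : Disjoint (Set.Icc (0:ℝ) b) (Set.Ioi b) := by
    rw [Set.disjoint_left]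
    intro t ht ht'
    simp only [Set.mem_Icc] at ht
    simp only [Set.mem_Ioi] at ht'
    linarith [ht.2]
  rw [← hset, setIntegral_union hdisj measurableSet_Ioi hg.integrableOn hg.integrableOn]
  have h1 : ∫ t in Set.Ioi b, g t = 0 :=
    setIntegral_eq_zero_of_forall_eq_zero fun t ht => h0 t ht
  rw [h1, add_zero, integral_Icc_eq_integral_Ioc, intervalIntegral.integral_of_le hb]

lemma integral_Iic_zero {g : ℝ → ℝ} (h : ∀ t ≤ (0:ℝ), g t = 0) :
    ∫ t in Set.Iic (0:ℝ), g t = 0 :=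
  setIntegral_eq_zero_of_forall_eq_zero fun t ht => h t ht

lemma integral_Ici_zero {g : ℝ → ℝ} (h : ∀ t ≥ (0:ℝ), g t = 0) :
    ∫ t in Set.Ici (0:ℝ), g t = 0 :=
  setIntegral_eq_zero_of_forall_eq_zero fun t ht => h t ht

lemma ae_ne (s0 : ℝ) : ∀ᵐ t : ℝ, t ≠ s0 := by
  have : (volume : Measure ℝ) {s0} = 0 := measure_singleton s0
  have h := measure_eq_zero_iff_ae_notMem.mp this
  filter_upwards [h] with t ht
  simpa using ht

lemma interval_trunc {g : ℝ → ℝ} (hg : Continuous g) {s0 s1 : ℝ}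
    (h0 : 0 ≤ s0) (h01 : s0 ≤ s1) (h1 : s1 ≤ 1)
    (hz0 : ∀ t, 0 ≤ t → t < s0 → g t = 0) (hz1 : ∀ t, s1 < t → t ≤ 1 → g t = 0) :
    ∫ t in (0:ℝ)..1, g t = ∫ t in s0..s1, g t := by
  have i1 : IntervalIntegrable g volume 0 s0 := hg.intervalIntegrable _ _
  have i2 : IntervalIntegrable g volume s0 s1 := hg.intervalIntegrable _ _
  have i3 : IntervalIntegrable g volume s1 1 := hg.intervalIntegrable _ _
  have e1 : ∫ t in (0:ℝ)..s0, g t = 0 := by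
    have : ∫ t in (0:ℝ)..s0, g t = ∫ t in (0:ℝ)..s0, (0:ℝ) := by
      apply intervalIntegral.integral_congr_ae
      filter_upwards [ae_ne s0] with t ht hmem
      rw [Set.uIoc_of_le h0] at hmem
      exact hz0 t (le_of_lt hmem.1) (lt_of_le_of_ne hmem.2 ht)
    simpa using this
  have e3 : ∫ t in s1..(1:ℝ), g t = 0 := by
    have : ∫ t in s1..(1:ℝ), g t = ∫ t in s1..(1:ℝ), (0:ℝ) := by
      apply intervalIntegral.integral_congr_ae
      filter_upwards with t hmem
      rw [Set.uIoc_of_le h1] at hmem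
      exact hz1 t hmem.1 hmem.2
    simpa using this
  have := intervalIntegral.integral_add_adjacent_intervals i1 i2
  have h2 := intervalIntegral.integral_add_adjacent_intervals (i1.trans i2) i3
  rw [← h2, ← this, e1, e3]; ring

lemma seg_reparam (f : ℂ → ℝ) {x d u v : ℂ} (hd : ‖d‖ = 1) {t1 t2 : ℝ} (h : t1 ≤ t2)
    (hu : u = x + (t1 : ℂ) * d) (hv : v = x + (t2 : ℂ) * d) :
    ∫ t in t1..t2, f (x + (t:ℂ) * d)
      = ‖v - u‖ * ∫ s in (0:ℝ)..1, f (u + (s:ℂ) * (v - u)) := by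
  have hvu : v - u = ((t2 - t1 : ℝ) : ℂ) * d := by rw [hu, hv]; push_cast; ring
  rcases eq_or_lt_of_le h with rfl | hlt
  · simp [hvu]
  · set c : ℝ := t2 - t1 with hc
    have hc0 : 0 < c := by simp [hc]; linarith
    have hnorm : ‖v - u‖ = c := by
      rw [hvu, norm_mul, Complex.norm_real, hd, mul_one, Real.norm_eq_abs, abs_of_pos hc0]
    have hint : ∫ s in (0:ℝ)..1, f (u + (s:ℂ) * (v - u))
        = ∫ s in (0:ℝ)..1, (fun t : ℝ => f (x + (t:ℂ) * d)) (c * s + t1) := by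
      apply intervalIntegral.integral_congr
      intro s _
      simp only
      congr 1
      rw [hu, hv, hc]; push_cast; ring
    rw [hint, intervalIntegral.integral_comp_mul_add (fun t : ℝ => f (x + (t:ℂ) * d))
      (ne_of_gt hc0) t1, hnorm]
    simp only [mul_zero, zero_add, mul_one, smul_eq_mul]
    rw [show c + t1 = t2 by rw [hc]; ring]
    rw [← mul_assoc, mul_inv_cancel₀ (ne_of_gt hc0), one_mul]

lemma unit_smul {s : ℝ} (hs : 0 < s) {d : ℂ} (hd : ‖d‖ = 1) :
    (‖(s:ℂ) * d‖ : ℂ)⁻¹ * ((s:ℂ) * d) = d := by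
  rw [norm_mul, Complex.norm_real, hd, mul_one, Real.norm_eq_abs, abs_of_pos hs]
  have h1 : ((s:ℂ))⁻¹ * (s:ℂ) = 1 := by
    rw [inv_mul_cancel₀]; exact_mod_cast ne_of_gt hs
  rw [← mul_assoc, h1, one_mul]

lemma seg_in_sq {u v : ℂ} (hu : u ∈ sqSet) (hv : v ∈ sqSet) :
    ∀ t ∈ Set.Icc (0:ℝ) 1, u + (t:ℂ) * (v - u) ∈ sqSet := by
  intro t ht
  simp only [sqSet, Set.mem_setOf_eq, Set.mem_Icc] at *
  constructor
  · constructor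
    · have : (u + (t:ℂ) * (v - u)).re = u.re + t * (v.re - u.re) := by
        simp [Complex.add_re, Complex.mul_re, Complex.sub_re, Complex.sub_im]
      rw [this]; nlinarith [hu.1.1, hu.1.2, hv.1.1, hv.1.2, ht.1, ht.2]
    · have : (u + (t:ℂ) * (v - u)).re = u.re + t * (v.re - u.re) := by
        simp [Complex.add_re, Complex.mul_re, Complex.sub_re, Complex.sub_im]
      rw [this]; nlinarith [hu.1.1, hu.1.2, hv.1.1, hv.1.2, ht.1, ht.2]
  · constructor
    · have : (u + (t:ℂ) * (v - u)).im = u.im + t * (v.im - u.im) := by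
        simp [Complex.add_im, Complex.mul_im, Complex.sub_re, Complex.sub_im]
      rw [this]; nlinarith [hu.2.1, hu.2.2, hv.2.1, hv.2.2, ht.1, ht.2]
    · have : (u + (t:ℂ) * (v - u)).im = u.im + t * (v.im - u.im) := by
        simp [Complex.add_im, Complex.mul_im, Complex.sub_re, Complex.sub_im]
      rw [this]; nlinarith [hu.2.1, hu.2.2, hv.2.1, hv.2.2, ht.1, ht.2]


lemma line_re (z w : ℂ) (t : ℝ) : (z + (t:ℂ) * w).re = z.re + t * w.re := by
  simp [Complex.add_re, Complex.mul_re]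

lemma line_im (z w : ℂ) (t : ℝ) : (z + (t:ℂ) * w).im = z.im + t * w.im := by
  simp [Complex.add_im, Complex.mul_im]

lemma norm_one_sq {w : ℂ} (h : ‖w‖ = 1) : w.re ^ 2 + w.im ^ 2 = 1 := by
  have h1 : ‖w‖ = 1 := h
  have h2 := Complex.sq_norm w
  rw [Complex.normSq_apply, h1] at h2
  nlinarith

lemma unit_eq_one {w : ℂ} (h : ‖w‖ = 1) (h0 : w.im = 0) (hpos : 0 ≤ w.re) : w = 1 := by
  have := norm_one_sq h
  rw [h0] at this
  have : w.re = 1 := by nlinarith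
  exact Complex.ext (by simp [this]) (by simp [h0])

lemma unit_eq_I {w : ℂ} (h : ‖w‖ = 1) (h0 : w.re = 0) (hpos : 0 ≤ w.im) : w = Complex.I := by
  have := norm_one_sq h
  rw [h0] at this
  have : w.im = 1 := by nlinarith
  exact Complex.ext (by simp [h0]) (by simp [this])

lemma exp_3pi2 : Complex.exp (((3 * Real.pi / 2 : ℝ) : ℂ) * Complex.I) = -Complex.I := by
  have hc : Real.cos (3 * Real.pi / 2) = 0 := by
    rw [show 3 * Real.pi / 2 = Real.pi / 2 + Real.pi by ring, Real.cos_add_pi,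
      Real.cos_pi_div_two, neg_zero]
  have hs : Real.sin (3 * Real.pi / 2) = -1 := by
    rw [show 3 * Real.pi / 2 = Real.pi / 2 + Real.pi by ring, Real.sin_add_pi,
      Real.sin_pi_div_two]
  apply Complex.ext
  · rw [Complex.exp_ofReal_mul_I_re, hc]; simp
  · rw [Complex.exp_ofReal_mul_I_im, hs]; simp

lemma exp_2pi : Complex.exp (2 * ((Real.pi : ℝ) : ℂ) * Complex.I) = 1 :=
  Complex.exp_two_pi_mul_I

lemma exp_3pi : Complex.exp (2 * ((3 * Real.pi / 2 : ℝ) : ℂ) * Complex.I) = -1 := by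
  rw [show 2 * ((3 * Real.pi / 2 : ℝ) : ℂ) * Complex.I
      = 2 * (Real.pi : ℂ) * Complex.I + (Real.pi : ℂ) * Complex.I by push_cast; ring]
  rw [Complex.exp_add, Complex.exp_two_pi_mul_I, Complex.exp_pi_mul_I, one_mul]

lemma classify {N : ℕ} {x d : ℕ → ℂ}
    (h : IsConeBRMax (1 + Complex.I) Real.pi (3 * Real.pi / 2) N x d) :
    (N = 1 ∧ (x 1).re = 1 ∧ (x 1).im < 1 ∧ d 0 = 1 ∧ d 1 = -1) ∨
    (N = 1 ∧ (x 1).im = 1 ∧ (x 1).re < 1 ∧ d 0 = Complex.I ∧ d 1 = -Complex.I) ∨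
    (N = 2 ∧ (x 1).im = 1 ∧ (x 1).re < 1 ∧ (x 2).re = 1 ∧ (x 2).im < 1 ∧
      0 < (d 0).re ∧ 0 < (d 0).im ∧ ‖d 0‖ = 1 ∧
      d 1 = (starRingEnd ℂ) (d 0) ∧ d 2 = -d 0 ∧
      (∃ L : ℝ, 0 < L ∧ x 2 = x 1 + (L:ℂ) * d 1)) ∨
    (N = 2 ∧ (x 1).re = 1 ∧ (x 1).im < 1 ∧ (x 2).im = 1 ∧ (x 2).re < 1 ∧
      0 < (d 0).re ∧ 0 < (d 0).im ∧ ‖d 0‖ = 1 ∧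
      d 1 = -(starRingEnd ℂ) (d 0) ∧ d 2 = -d 0 ∧
      (∃ L : ℝ, 0 < L ∧ x 2 = x 1 + (L:ℂ) * d 1)) := by
  obtain ⟨hN, hunit, hseg, hin, hout, hmid, hrefl⟩ := h
  -- characterize reflections
  have hrefl' : ∀ i, 1 ≤ i → i ≤ N →
      ((x i).im = 1 ∧ (x i).re < 1 ∧ d i = (starRingEnd ℂ) (d (i - 1))) ∨
      ((x i).re = 1 ∧ (x i).im < 1 ∧ d i = -(starRingEnd ℂ) (d (i - 1))) := by
    intro i hi1 hiN
    rcases hrefl i hi1 hiN with ⟨⟨r, hr, hxi⟩, hdi⟩ | ⟨⟨r, hr, hxi⟩, hdi⟩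
    · left
      rw [Complex.exp_pi_mul_I] at hxi
      refine ⟨?_, ?_, ?_⟩
      · rw [hxi]; simp
      · rw [hxi]; simp; linarith
      · rw [hdi, exp_2pi, one_mul]
    · right
      rw [exp_3pi2] at hxi
      refine ⟨?_, ?_, ?_⟩
      · rw [hxi]; simp
      · rw [hxi]; simp; linarith
      · rw [hdi, exp_3pi]; ring
  have hd0 : ‖d 0‖ = 1 := hunit 0 (Nat.zero_le N)
  have hsq0 := norm_one_sq hd0
  -- incoming/outgoing coordinates
  have hx1 : (x 1).re ≤ 1 ∧ (x 1).im ≤ 1 := by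
    have := mem_cone_iff.mp (hin 0 le_rfl)
    simpa using this
  have hxN : (x N).re ≤ 1 ∧ (x N).im ≤ 1 := by
    have := mem_cone_iff.mp (hout 0 le_rfl)
    simpa using this
  have hin' : ∀ t : ℝ, t ≤ 0 →
      (x 1).re + t * (d 0).re ≤ 1 ∧ (x 1).im + t * (d 0).im ≤ 1 := by
    intro t ht
    have := mem_cone_iff.mp (hin t ht)
    rwa [line_re, line_im] at this
  have hout' : ∀ t : ℝ, 0 ≤ t →
      (x N).re + t * (d N).re ≤ 1 ∧ (x N).im + t * (d N).im ≤ 1 := by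
    intro t ht
    have := mem_cone_iff.mp (hout t ht)
    rwa [line_re, line_im] at this
  have d0re : 0 ≤ (d 0).re := by
    by_contra hlt
    push_neg at hlt
    have ht : (2 - (x 1).re) / (d 0).re ≤ 0 :=
      le_of_lt (div_neg_of_pos_of_neg (by linarith [hx1.1]) hlt)
    have := (hin' _ ht).1
    rw [div_mul_cancel₀ _ (ne_of_lt hlt)] at this
    linarith
  have d0im : 0 ≤ (d 0).im := by
    by_contra hlt
    push_neg at hlt
    have ht : (2 - (x 1).im) / (d 0).im ≤ 0 :=
      le_of_lt (div_neg_of_pos_of_neg (by linarith [hx1.2]) hlt)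
    have := (hin' _ ht).2
    rw [div_mul_cancel₀ _ (ne_of_lt hlt)] at this
    linarith
  have dNre : (d N).re ≤ 0 := by
    by_contra hlt
    push_neg at hlt
    have ht : 0 ≤ (2 - (x N).re) / (d N).re :=
      le_of_lt (div_pos (by linarith [hxN.1]) hlt)
    have := (hout' _ ht).1
    rw [div_mul_cancel₀ _ (ne_of_gt hlt)] at this
    linarith
  have dNim : (d N).im ≤ 0 := by
    by_contra hlt
    push_neg at hlt
    have ht : 0 ≤ (2 - (x N).im) / (d N).im :=
      le_of_lt (div_pos (by linarith [hxN.2]) hlt)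
    have := (hout' _ ht).2
    rw [div_mul_cancel₀ _ (ne_of_gt hlt)] at this
    linarith
  rcases hrefl' 1 le_rfl hN with ⟨h1im, h1re, hd1⟩ | ⟨h1re, h1im, hd1⟩
  · -- first reflection on the horizontal wall {im = 1}
    by_cases hα : (d 0).re = 0
    · -- d 0 = I, vertical ray: N = 1
      have hd0I : d 0 = Complex.I := unit_eq_I hd0 hα d0im
      have hd1I : d 1 = -Complex.I := by
        rw [hd1, show (1:ℕ) - 1 = 0 from rfl, hd0I]
        simp
      have hN1 : N = 1 := by
        by_contra hne
        have h2N : 2 ≤ N := by omega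
        obtain ⟨L, hL, hx2⟩ := hseg 1 le_rfl (by omega)
        rcases hrefl' 2 (by omega) h2N with ⟨h2im, _, _⟩ | ⟨h2re, _, _⟩
        · rw [hx2, line_im, h1im, hd1I] at h2im
          simp at h2im
          linarith
        · rw [hx2, line_re, hd1I] at h2re
          simp at h2re
          linarith
      exact Or.inr (Or.inl ⟨hN1, h1im, h1re, hd0I, hd1I⟩)
    · by_cases hβ : (d 0).im = 0
      · -- d 0 = 1, sliding along the top wall: impossible
        exfalso
        have hd01 : d 0 = 1 := unit_eq_one hd0 hβ d0re
        have key : ∀ j, 1 ≤ j → j ≤ N → (x j).im = 1 ∧ d j = 1 := by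
          intro j
          induction j with
          | zero => omega
          | succ n ih =>
            intro _ hjN
            by_cases hn : n = 0
            · subst hn
              refine ⟨h1im, ?_⟩
              rw [hd1, show (1:ℕ) - 1 = 0 from rfl, hd01]
              simp
            · have ⟨him, hdn⟩ := ih (by omega) (by omega)
              obtain ⟨L, hL, hxs⟩ := hseg n (by omega) (by omega)
              have himn : (x (n + 1)).im = 1 := by
                rw [hxs, line_im, him, hdn]; simp
              rcases hrefl' (n + 1) (by omega) hjN with ⟨_, _, hds⟩ | ⟨_, hlt, _⟩
              · refine ⟨himn, ?_⟩
                rw [hds, show n + 1 - 1 = n from rfl, hdn]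
                simp
              · rw [himn] at hlt; linarith
        have := (key N hN le_rfl).2
        rw [this] at dNre
        simp at dNre
        linarith
      · -- nondegenerate: N = 2, H then V
        have hα' : 0 < (d 0).re := lt_of_le_of_ne d0re (Ne.symm hα)
        have hβ' : 0 < (d 0).im := lt_of_le_of_ne d0im (Ne.symm hβ)
        have hd1' : d 1 = (starRingEnd ℂ) (d 0) := by
          rw [hd1, show (1:ℕ) - 1 = 0 from rfl]
        have h2N : 2 ≤ N := by
          by_contra hne
          have : N = 1 := by omega
          subst this
          rw [hd1'] at dNre
          rw [Complex.conj_re] at dNre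
          linarith
        obtain ⟨L, hL, hx2⟩ := hseg 1 le_rfl (by omega)
        rcases hrefl' 2 (by omega) h2N with ⟨h2im, _, _⟩ | ⟨h2re, h2im, hd2⟩
        · exfalso
          rw [hx2, line_im, h1im, hd1'] at h2im
          rw [Complex.conj_im] at h2im
          nlinarith
        · have hd2' : d 2 = -d 0 := by
            rw [hd2, show (2:ℕ) - 1 = 1 from rfl, hd1']
            simp
          have hN2 : N = 2 := by
            by_contra hne
            have h3N : 3 ≤ N := by omega
            obtain ⟨L2, hL2, hx3⟩ := hseg 2 (by omega) (by omega)
            rcases hrefl' 3 (by omega) h3N with ⟨h3im, _, _⟩ | ⟨h3re, _, _⟩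
            · rw [hx3, line_im, hd2'] at h3im
              simp only [Complex.neg_im] at h3im
              nlinarith
            · rw [hx3, line_re, h2re, hd2'] at h3re
              simp only [Complex.neg_re] at h3re
              nlinarith
          exact Or.inr (Or.inr (Or.inl ⟨hN2, h1im, h1re, h2re, h2im, hα', hβ', hd0, hd1', hd2',
            L, hL, hx2⟩))
  · -- first reflection on the vertical wall {re = 1}
    by_cases hβ : (d 0).im = 0
    · have hd01 : d 0 = 1 := unit_eq_one hd0 hβ d0re
      have hd1m : d 1 = -1 := by
        rw [hd1, show (1:ℕ) - 1 = 0 from rfl, hd01]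
        simp
      have hN1 : N = 1 := by
        by_contra hne
        have h2N : 2 ≤ N := by omega
        obtain ⟨L, hL, hx2⟩ := hseg 1 le_rfl (by omega)
        rcases hrefl' 2 (by omega) h2N with ⟨h2im, _, _⟩ | ⟨h2re, _, _⟩
        · rw [hx2, line_im, hd1m] at h2im
          simp at h2im
          linarith
        · rw [hx2, line_re, h1re, hd1m] at h2re
          simp at h2re
          linarith
      exact Or.inl ⟨hN1, h1re, h1im, hd01, hd1m⟩
    · by_cases hα : (d 0).re = 0
      · exfalso
        have hd0I : d 0 = Complex.I := unit_eq_I hd0 hα d0im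
        have key : ∀ j, 1 ≤ j → j ≤ N → (x j).re = 1 ∧ d j = Complex.I := by
          intro j
          induction j with
          | zero => omega
          | succ n ih =>
            intro _ hjN
            by_cases hn : n = 0
            · subst hn
              refine ⟨h1re, ?_⟩
              rw [hd1, show (1:ℕ) - 1 = 0 from rfl, hd0I]
              simp
            · have ⟨hre, hdn⟩ := ih (by omega) (by omega)
              obtain ⟨L, hL, hxs⟩ := hseg n (by omega) (by omega)
              have hren : (x (n + 1)).re = 1 := by
                rw [hxs, line_re, hre, hdn]; simp
              rcases hrefl' (n + 1) (by omega) hjN with ⟨_, hlt, _⟩ | ⟨_, _, hds⟩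
              · rw [hren] at hlt; linarith
              · refine ⟨hren, ?_⟩
                rw [hds, show n + 1 - 1 = n from rfl, hdn]
                simp
        have := (key N hN le_rfl).2
        rw [this] at dNim
        simp at dNim
        linarith
      · have hα' : 0 < (d 0).re := lt_of_le_of_ne d0re (Ne.symm hα)
        have hβ' : 0 < (d 0).im := lt_of_le_of_ne d0im (Ne.symm hβ)
        have hd1' : d 1 = -(starRingEnd ℂ) (d 0) := by
          rw [hd1, show (1:ℕ) - 1 = 0 from rfl]
        have h2N : 2 ≤ N := by
          by_contra hne
          have : N = 1 := by omega
          subst this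
          rw [hd1'] at dNim
          simp only [Complex.neg_im, Complex.conj_im] at dNim
          linarith
        obtain ⟨L, hL, hx2⟩ := hseg 1 le_rfl (by omega)
        rcases hrefl' 2 (by omega) h2N with ⟨h2im, h2re, hd2⟩ | ⟨h2re, _, _⟩
        · have hd2' : d 2 = -d 0 := by
            rw [hd2, show (2:ℕ) - 1 = 1 from rfl, hd1']
            simp
          have hN2 : N = 2 := by
            by_contra hne
            have h3N : 3 ≤ N := by omega
            obtain ⟨L2, hL2, hx3⟩ := hseg 2 (by omega) (by omega)
            rcases hrefl' 3 (by omega) h3N with ⟨h3im, _, _⟩ | ⟨h3re, _, _⟩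
            · rw [hx3, line_im, h2im, hd2'] at h3im
              simp only [Complex.neg_im] at h3im
              nlinarith
            · rw [hx3, line_re, hd2'] at h3re
              simp only [Complex.neg_re] at h3re
              nlinarith
          exact Or.inr (Or.inr (Or.inr ⟨hN2, h1re, h1im, h2im, h2re, hα', hβ', hd0, hd1', hd2',
            L, hL, hx2⟩))
        · exfalso
          rw [hx2, line_re, h1re, hd1'] at h2re
          simp only [Complex.neg_re, Complex.conj_re] at h2re
          nlinarith

noncomputable def sigmaC (z : ℂ) : ℂ := Complex.I * (starRingEnd ℂ) z

lemma sC_invol (z : ℂ) : sigmaC (sigmaC z) = z := by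
  simp [sigmaC, map_mul, Complex.conj_I]
  rw [← mul_assoc, Complex.I_mul_I]
  ring

lemma sC_add (a b : ℂ) : sigmaC (a + b) = sigmaC a + sigmaC b := by
  simp [sigmaC, map_add]; ring

lemma sC_sub (a b : ℂ) : sigmaC (a - b) = sigmaC a - sigmaC b := by
  simp [sigmaC, map_sub]; ring

lemma sC_rsmul (t : ℝ) (a : ℂ) : sigmaC ((t:ℂ) * a) = (t:ℂ) * sigmaC a := by
  simp [sigmaC, map_mul, Complex.conj_ofReal]; ring

lemma sC_norm (z : ℂ) : ‖sigmaC z‖ = ‖z‖ := by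
  simp [sigmaC]

lemma sC_re (z : ℂ) : (sigmaC z).re = z.im := by
  simp [sigmaC, Complex.mul_re]

lemma sC_im (z : ℂ) : (sigmaC z).im = z.re := by
  simp [sigmaC, Complex.mul_im]

lemma sC_mem_sq {z : ℂ} (h : z ∈ sqSet) : sigmaC z ∈ sqSet := by
  rw [mem_sqSet_iff] at h ⊢
  rw [sC_re, sC_im]
  tauto

lemma sC_mem_sqE {z : ℂ} (h : z ∈ sqE) : sigmaC z ∈ sqE := by
  obtain ⟨h1, h2⟩ := h
  exact ⟨sC_mem_sq h1, by rw [sC_re, sC_im]; tauto⟩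

lemma sC_inj {a b : ℂ} (h : sigmaC a = sigmaC b) : a = b := by
  have := congrArg sigmaC h
  rwa [sC_invol, sC_invol] at this

lemma sC_neg (a : ℂ) : sigmaC (-a) = -sigmaC a := by
  simp [sigmaC]

lemma sC_conj (w : ℂ) : sigmaC ((starRingEnd ℂ) w) = -(starRingEnd ℂ) (sigmaC w) := by
  simp [sigmaC, map_mul, Complex.conj_I, Complex.conj_conj]

lemma sC_unit (a : ℂ) :
    (‖sigmaC a‖ : ℂ)⁻¹ * sigmaC a = sigmaC ((‖a‖ : ℂ)⁻¹ * a) := by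
  rw [sC_norm]
  have : sigmaC ((‖a‖ : ℂ)⁻¹ * a) = (starRingEnd ℂ) ((‖a‖ : ℂ)⁻¹) * sigmaC a := by
    simp [sigmaC, map_mul]; ring
  rw [this]
  congr 1
  rw [show ((‖a‖ : ℂ))⁻¹ = ((‖a‖⁻¹ : ℝ) : ℂ) by push_cast; ring, Complex.conj_ofReal]

lemma sC_BR {N : ℕ} {x : ℕ → ℂ} (h : IsSquareBR N x) :
    IsSquareBR N (fun i => sigmaC (x i)) := by
  obtain ⟨hN, hne, hseg, h0, hNE, hrefl⟩ := h
  refine ⟨hN, ?_, ?_, sC_mem_sqE h0, sC_mem_sqE hNE, ?_⟩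
  · intro i hi
    simp only
    intro hc
    exact hne i hi (sC_inj hc)
  · intro i hi t ht
    simp only
    have : sigmaC (x i) + (t:ℂ) * (sigmaC (x (i+1)) - sigmaC (x i))
        = sigmaC (x i + (t:ℂ) * (x (i+1) - x i)) := by
      rw [sC_add, sC_rsmul, sC_sub]
    rw [this]
    exact sC_mem_sq (hseg i hi t ht)
  · intro i hi
    simp only
    have e1 : sigmaC (x (i+2)) - sigmaC (x (i+1)) = sigmaC (x (i+2) - x (i+1)) :=
      (sC_sub _ _).symm
    have e2 : sigmaC (x (i+1)) - sigmaC (x i) = sigmaC (x (i+1) - x i) :=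
      (sC_sub _ _).symm
    rw [e1, e2, sC_unit, sC_unit]
    rcases hrefl i hi with ⟨hre, heq⟩ | ⟨him, heq⟩
    · right
      refine ⟨by rw [sC_im]; exact hre, ?_⟩
      rw [heq, sC_neg, sC_conj, neg_neg]
    · left
      refine ⟨by rw [sC_re]; exact him, ?_⟩
      rw [heq, sC_conj]

lemma sC_brtSumC (f : ℂ → ℝ) (N : ℕ) (x : ℕ → ℂ) :
    brtSumC (fun z => f (sigmaC z)) N x = brtSumC f N (fun i => sigmaC (x i)) := by
  unfold brtSumC
  apply Finset.sum_congr rfl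
  intro i _
  simp only
  rw [← sC_sub, sC_norm]
  congr 1
  apply intervalIntegral.integral_congr
  intro t _
  simp only
  congr 1
  rw [sC_add, sC_rsmul, sC_sub]

lemma vanish_sigma {f : ℂ → ℝ}
    (hvan : ∀ (N : ℕ) (x : ℕ → ℂ), IsSquareBR N x → brtSumC f N x = 0) :
    ∀ (N : ℕ) (x : ℕ → ℂ), IsSquareBR N x → brtSumC (fun z => f (sigmaC z)) N x = 0 := by
  intro N x h
  rw [sC_brtSumC]
  exact hvan N _ (sC_BR h)

lemma mem_sqE_iff {z : ℂ} : z ∈ sqE ↔ z ∈ sqSet ∧ (z.re = 0 ∨ z.im = 0) := Iff.rfl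

lemma integral_Iic_zero' {g : ℝ → ℝ} (h : ∀ t < (0:ℝ), g t = 0) :
    ∫ t in Set.Iic (0:ℝ), g t = 0 := by
  rw [integral_Iic_eq_integral_Iio]
  exact setIntegral_eq_zero_of_forall_eq_zero fun t ht => h t ht

lemma integral_Ici_zero' {g : ℝ → ℝ} (h : ∀ t > (0:ℝ), g t = 0) :
    ∫ t in Set.Ici (0:ℝ), g t = 0 := by
  rw [integral_Ici_eq_integral_Ioi]
  exact setIntegral_eq_zero_of_forall_eq_zero fun t ht => h t ht

lemma fzero_of_supp {f : ℂ → ℝ} (hsupp : ∀ z, f z ≠ 0 → z ∈ sqSet) :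
    ∀ z : ℂ, z.re < 0 ∨ 1 < z.re ∨ z.im < 0 ∨ 1 < z.im → f z = 0 := by
  intro z hz
  by_contra hne
  have h := mem_sqSet_iff.mp (hsupp z hne)
  rcases hz with h' | h' | h' | h' <;> linarith [h.1, h.2.1, h.2.2.1, h.2.2.2]

lemma caseV {f : ℂ → ℝ} (hf : Continuous f) (hsupp : ∀ z, f z ≠ 0 → z ∈ sqSet)
    (hvanish : ∀ (N : ℕ) (x : ℕ → ℂ), IsSquareBR N x → brtSumC f N x = 0)
    {x1 : ℂ} (h1re : x1.re = 1) (h1im : x1.im < 1) :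
    (∫ t in Set.Iic (0:ℝ), f (x1 + (t:ℂ) * 1))
      + (∫ t in Set.Ici (0:ℝ), f (x1 + (t:ℂ) * (-1))) = 0 := by
  have hb : ∀ z, f z ≠ 0 → ‖z‖ ≤ 2 := fun z hz => sq_bound (mem_sqSet_iff.mp (hsupp z hz))
  have fzero := fzero_of_supp hsupp
  have n1 : ‖(1:ℂ)‖ = 1 := by norm_num
  have nm1 : ‖(-1:ℂ)‖ = 1 := by norm_num
  by_cases hc : 0 ≤ x1.im
  · have hx1 : x1 ∈ sqSet := mem_sqSet_iff.mpr ⟨by rw [h1re]; norm_num, le_of_eq h1re,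
      hc, le_of_lt h1im⟩
    have hu : x1 - 1 ∈ sqSet := by
      rw [mem_sqSet_iff]
      simp only [Complex.sub_re, Complex.sub_im, Complex.one_re, Complex.one_im, h1re]
      norm_num
      exact ⟨hc, le_of_lt h1im⟩
    have I1 : ∫ t in Set.Iic (0:ℝ), f (x1 + (t:ℂ) * 1)
        = ∫ t in (-1:ℝ)..0, f (x1 + (t:ℂ) * 1) := by
      apply integral_Iic_trunc (lineIntegrable hf hb x1 1 n1) (by norm_num)
      intro t ht
      apply fzero
      left
      rw [line_re, h1re, Complex.one_re]
      linarith
    have R1 := seg_reparam f n1 (show (-1:ℝ) ≤ 0 by norm_num)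
      (show x1 - 1 = x1 + ((-1:ℝ):ℂ) * 1 by push_cast; ring)
      (show x1 = x1 + ((0:ℝ):ℂ) * 1 by push_cast; ring)
    have I2 : ∫ t in Set.Ici (0:ℝ), f (x1 + (t:ℂ) * (-1))
        = ∫ t in (0:ℝ)..1, f (x1 + (t:ℂ) * (-1)) := by
      apply integral_Ici_trunc (lineIntegrable hf hb x1 (-1) nm1) zero_le_one
      intro t ht
      apply fzero
      left
      rw [line_re, h1re]
      simp only [Complex.neg_re, Complex.one_re]
      linarith
    have R2 := seg_reparam f nm1 zero_le_one
      (show x1 = x1 + ((0:ℝ):ℂ) * (-1) by push_cast; ring)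
      (show x1 - 1 = x1 + ((1:ℝ):ℂ) * (-1) by push_cast; ring)
    set X : ℕ → ℂ := fun n => if n = 0 then x1 - 1 else if n = 1 then x1 else x1 - 1 with hX
    have eX0 : X 0 = x1 - 1 := by norm_num [hX]
    have eX1 : X 1 = x1 := by norm_num [hX]
    have eX2 : X 2 = x1 - 1 := by norm_num [hX]
    have hE : x1 - 1 ∈ sqE := mem_sqE_iff.mpr ⟨hu, Or.inl (by
      simp [Complex.sub_re, h1re])⟩
    have hBR : IsSquareBR 2 X := by
      refine ⟨one_le_two, ?_, ?_, ?_, ?_, ?_⟩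
      · intro i hi
        interval_cases i
        · rw [eX0, eX1]
          intro h
          exact (one_ne_zero : (1:ℂ) ≠ 0) (by linear_combination -h)
        · rw [eX1, eX2]
          intro h
          exact (one_ne_zero : (1:ℂ) ≠ 0) (by linear_combination h)
      · intro i hi t ht
        interval_cases i
        · rw [eX0, eX1]; exact seg_in_sq hu hx1 t ht
        · rw [eX1, eX2]; exact seg_in_sq hx1 hu t ht
      · rw [eX0]; exact hE
      · rw [eX2]; exact hE
      · intro i hi
        have hi0 : i = 0 := by omega
        subst hi0
        left
        rw [show (0:ℕ) + 1 = 1 from rfl, show (0:ℕ) + 2 = 2 from rfl, eX0, eX1, eX2]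
        refine ⟨h1re, ?_⟩
        rw [show x1 - 1 - x1 = -1 by ring, show x1 - (x1 - 1) = 1 by ring]
        rw [n1, nm1]
        simp
    have hv := hvanish 2 X hBR
    unfold brtSumC at hv
    rw [Finset.sum_range_succ, Finset.sum_range_succ, Finset.sum_range_zero] at hv
    rw [show (0:ℕ) + 1 = 1 from rfl, show (1:ℕ) + 1 = 2 from rfl, eX0, eX1, eX2] at hv
    rw [I1, R1, I2, R2]
    linarith
  · push_neg at hc
    have Z1 : ∫ t in Set.Iic (0:ℝ), f (x1 + (t:ℂ) * 1) = 0 := by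
      apply integral_Iic_zero'
      intro t _
      apply fzero
      right; right; left
      rw [line_im]
      simp only [Complex.one_im]
      linarith
    have Z2 : ∫ t in Set.Ici (0:ℝ), f (x1 + (t:ℂ) * (-1)) = 0 := by
      apply integral_Ici_zero'
      intro t _
      apply fzero
      right; right; left
      rw [line_im]
      simp only [Complex.neg_im, Complex.one_im]
      linarith
    rw [Z1, Z2, add_zero]

lemma sigma_cont {f : ℂ → ℝ} (hf : Continuous f) : Continuous (fun z => f (sigmaC z)) := by
  apply hf.comp
  unfold sigmaC
  exact continuous_const.mul (Complex.continuous_conj)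

lemma sigma_supp {f : ℂ → ℝ} (hsupp : ∀ z, f z ≠ 0 → z ∈ sqSet) :
    ∀ z, (fun z => f (sigmaC z)) z ≠ 0 → z ∈ sqSet := by
  intro z hz
  have h := sC_mem_sq (hsupp _ hz)
  rwa [sC_invol] at h

lemma sC_one : sigmaC 1 = Complex.I := by simp [sigmaC]

lemma caseH {f : ℂ → ℝ} (hf : Continuous f) (hsupp : ∀ z, f z ≠ 0 → z ∈ sqSet)
    (hvanish : ∀ (N : ℕ) (x : ℕ → ℂ), IsSquareBR N x → brtSumC f N x = 0)
    {x1 : ℂ} (h1im : x1.im = 1) (h1re : x1.re < 1) :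
    (∫ t in Set.Iic (0:ℝ), f (x1 + (t:ℂ) * Complex.I))
      + (∫ t in Set.Ici (0:ℝ), f (x1 + (t:ℂ) * (-Complex.I))) = 0 := by
  have h := caseV (sigma_cont hf) (sigma_supp hsupp) (vanish_sigma hvanish)
    (x1 := sigmaC x1) (by rw [sC_re]; exact h1im) (by rw [sC_im]; exact h1re)
  have E1 : ∫ t in Set.Iic (0:ℝ), f (x1 + (t:ℂ) * Complex.I)
      = ∫ t in Set.Iic (0:ℝ), f (sigmaC (sigmaC x1 + (t:ℂ) * 1)) := by
    apply setIntegral_congr_fun measurableSet_Iic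
    intro t _
    show f (x1 + (t:ℂ) * Complex.I) = f (sigmaC (sigmaC x1 + (t:ℂ) * 1))
    congr 1
    rw [sC_add, sC_rsmul, sC_invol, sC_one]
  have E2 : ∫ t in Set.Ici (0:ℝ), f (x1 + (t:ℂ) * (-Complex.I))
      = ∫ t in Set.Ici (0:ℝ), f (sigmaC (sigmaC x1 + (t:ℂ) * (-1))) := by
    apply setIntegral_congr_fun measurableSet_Ici
    intro t _
    show f (x1 + (t:ℂ) * (-Complex.I)) = f (sigmaC (sigmaC x1 + (t:ℂ) * (-1)))
    congr 1
    rw [sC_add, sC_rsmul, sC_invol, sC_neg, sC_one]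
  rw [E1, E2]
  exact h

lemma move_ne {x d : ℂ} {s : ℝ} (hs : s ≠ 0) (hd : d ≠ 0) : x + (s:ℂ) * d ≠ x := by
  intro h
  have h0 : (s:ℂ) * d = 0 := by linear_combination h
  rcases mul_eq_zero.mp h0 with h' | h'
  · exact hs (by exact_mod_cast h')
  · exact hd h'

lemma unit_ne_zero {d : ℂ} (hd : ‖d‖ = 1) : d ≠ 0 := by
  intro h
  rw [h] at hd
  simp at hd

lemma entry_exists {α β c : ℝ} (hα : 0 < α) (hβ : 0 < β) (hc0 : 0 ≤ c) (hc1 : c < 1) :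
    ∃ s : ℝ, s ≤ 0 ∧ (0 < c → s < 0) ∧
      0 ≤ c + s * α ∧ c + s * α ≤ 1 ∧ 0 ≤ 1 + s * β ∧ 1 + s * β ≤ 1 ∧
      (c + s * α = 0 ∨ 1 + s * β = 0) ∧
      ∀ t < s, (c + t * α < 0 ∨ 1 + t * β < 0) := by
  rcases le_total (c / α) (1 / β) with h | h
  · refine ⟨-(c / α), ?_, ?_, ?_, ?_, ?_, ?_, ?_, ?_⟩
    · have := div_nonneg hc0 (le_of_lt hα); linarith
    · intro hc; have := div_pos hc hα; linarith
    · rw [neg_mul, div_mul_cancel₀ _ (ne_of_gt hα)]; linarith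
    · rw [neg_mul, div_mul_cancel₀ _ (ne_of_gt hα)]; linarith
    · have h2 : c / α * β ≤ 1 := by
        rw [div_mul_eq_mul_div, div_le_one hα]
        rw [div_le_div_iff₀ hα hβ] at h
        linarith
      nlinarith
    · nlinarith [div_nonneg hc0 (le_of_lt hα)]
    · left; rw [neg_mul, div_mul_cancel₀ _ (ne_of_gt hα)]; ring
    · intro t ht
      left
      have : t * α < -(c / α) * α := by
        apply mul_lt_mul_of_pos_right ht hα
      rw [neg_mul, div_mul_cancel₀ _ (ne_of_gt hα)] at this
      linarith
  · refine ⟨-(1 / β), ?_, ?_, ?_, ?_, ?_, ?_, ?_, ?_⟩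
    · have := div_nonneg (zero_le_one) (le_of_lt hβ); linarith
    · intro _; have := div_pos one_pos hβ; linarith
    · have h2 : 1 / β * α ≤ c := by
        rw [div_mul_eq_mul_div, div_le_iff₀ hβ]
        rw [div_le_div_iff₀ hβ hα] at h
        linarith
      nlinarith
    · nlinarith [div_pos one_pos hβ, hα]
    · rw [neg_mul, div_mul_cancel₀ _ (ne_of_gt hβ)]; linarith
    · rw [neg_mul, div_mul_cancel₀ _ (ne_of_gt hβ)]; linarith
    · right; rw [neg_mul, div_mul_cancel₀ _ (ne_of_gt hβ)]; ring
    · intro t ht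
      right
      have : t * β < -(1 / β) * β := mul_lt_mul_of_pos_right ht hβ
      rw [neg_mul, div_mul_cancel₀ _ (ne_of_gt hβ)] at this
      linarith

lemma exit_exists {α β e : ℝ} (hα : 0 < α) (hβ : 0 < β) (he0 : 0 ≤ e) (he1 : e < 1) :
    ∃ s : ℝ, 0 ≤ s ∧ (0 < e → 0 < s) ∧
      0 ≤ 1 - s * α ∧ 1 - s * α ≤ 1 ∧ 0 ≤ e - s * β ∧ e - s * β ≤ 1 ∧
      (1 - s * α = 0 ∨ e - s * β = 0) ∧
      ∀ t > s, (1 - t * α < 0 ∨ e - t * β < 0) := by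
  rcases le_total (1 / α) (e / β) with h | h
  · refine ⟨1 / α, ?_, ?_, ?_, ?_, ?_, ?_, ?_, ?_⟩
    · positivity
    · intro _; positivity
    · rw [div_mul_cancel₀ _ (ne_of_gt hα)]; linarith
    · rw [div_mul_cancel₀ _ (ne_of_gt hα)]; linarith
    · have h2 : 1 / α * β ≤ e := by
        rw [div_mul_eq_mul_div, div_le_iff₀ hα]
        rw [div_le_div_iff₀ hα hβ] at h
        linarith
      linarith
    · nlinarith [div_pos one_pos hα, hβ]
    · left; rw [div_mul_cancel₀ _ (ne_of_gt hα)]; ring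
    · intro t ht
      left
      have : 1 / α * α < t * α := mul_lt_mul_of_pos_right ht hα
      rw [div_mul_cancel₀ _ (ne_of_gt hα)] at this
      linarith
  · refine ⟨e / β, ?_, ?_, ?_, ?_, ?_, ?_, ?_, ?_⟩
    · positivity
    · intro he; positivity
    · have h2 : e / β * α ≤ 1 := by
        rw [div_mul_eq_mul_div, div_le_one hβ]
        rw [div_le_div_iff₀ hβ hα] at h
        linarith
      linarith
    · nlinarith [div_nonneg he0 (le_of_lt hβ), hα]
    · rw [div_mul_cancel₀ _ (ne_of_gt hβ)]; linarith
    · rw [div_mul_cancel₀ _ (ne_of_gt hβ)]; linarith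
    · right; rw [div_mul_cancel₀ _ (ne_of_gt hβ)]; ring
    · intro t ht
      right
      have : e / β * β < t * β := mul_lt_mul_of_pos_right ht hβ
      rw [div_mul_cancel₀ _ (ne_of_gt hβ)] at this
      linarith

lemma seg_sub_reparam (f : ℂ → ℝ) (x D : ℂ) {t1 t2 : ℝ} (h : t1 ≤ t2) :
    ∫ t in t1..t2, f (x + (t:ℂ) * D)
      = (t2 - t1) * ∫ s in (0:ℝ)..1,
          f ((x + (t1:ℂ) * D) + (s:ℂ) * ((x + (t2:ℂ) * D) - (x + (t1:ℂ) * D))) := by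
  rcases eq_or_lt_of_le h with rfl | hlt
  · simp
  · set c : ℝ := t2 - t1 with hc
    have hc0 : 0 < c := by simp [hc]; linarith
    have hint : ∫ s in (0:ℝ)..1,
        f ((x + (t1:ℂ) * D) + (s:ℂ) * ((x + (t2:ℂ) * D) - (x + (t1:ℂ) * D)))
        = ∫ s in (0:ℝ)..1, (fun t : ℝ => f (x + (t:ℂ) * D)) (c * s + t1) := by
      apply intervalIntegral.integral_congr
      intro s _
      simp only
      congr 1
      rw [hc]; push_cast; ring
    rw [hint, intervalIntegral.integral_comp_mul_add (fun t : ℝ => f (x + (t:ℂ) * D))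
      (ne_of_gt hc0) t1]
    simp only [mul_zero, zero_add, mul_one, smul_eq_mul]
    rw [show c + t1 = t2 by rw [hc]; ring]
    rw [← mul_assoc, mul_inv_cancel₀ (ne_of_gt hc0), one_mul]

set_option maxHeartbeats 1000000 in
lemma caseHV {f : ℂ → ℝ} (hf : Continuous f) (hsupp : ∀ z, f z ≠ 0 → z ∈ sqSet)
    (hvanish : ∀ (N : ℕ) (x : ℕ → ℂ), IsSquareBR N x → brtSumC f N x = 0)
    {x1 x2 d0 : ℂ} (h1im : x1.im = 1) (h1re : x1.re < 1)
    (h2re : x2.re = 1) (h2im : x2.im < 1)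
    (hα : 0 < d0.re) (hβ : 0 < d0.im) (hd0 : ‖d0‖ = 1)
    (hx2 : ∃ L : ℝ, 0 < L ∧ x2 = x1 + (L:ℂ) * (starRingEnd ℂ) d0) :
    (∫ t in Set.Iic (0:ℝ), f (x1 + (t:ℂ) * d0))
      + ‖x2 - x1‖ * (∫ t in (0:ℝ)..1, f (x1 + (t:ℂ) * (x2 - x1)))
      + (∫ t in Set.Ici (0:ℝ), f (x2 + (t:ℂ) * (-d0))) = 0 := by
  obtain ⟨L, hL, hx2e⟩ := hx2
  have hb : ∀ z, f z ≠ 0 → ‖z‖ ≤ 2 := fun z hz => sq_bound (mem_sqSet_iff.mp (hsupp z hz))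
  have fzero := fzero_of_supp hsupp
  have hd0ne : d0 ≠ 0 := unit_ne_zero hd0
  have hcne : ‖(starRingEnd ℂ) d0‖ = 1 := by rw [RCLike.norm_conj]; exact hd0
  have hconjne : (starRingEnd ℂ) d0 ≠ 0 := unit_ne_zero hcne
  have hnm : ‖-d0‖ = 1 := by rw [norm_neg]; exact hd0
  have hDeq : x2 - x1 = (L:ℂ) * (starRingEnd ℂ) d0 := by rw [hx2e]; ring
  have hDsubre : (x2 - x1).re = 1 - x1.re := by rw [Complex.sub_re, h2re]
  have hDsubim : (x2 - x1).im = x2.im - 1 := by rw [Complex.sub_im, h1im]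
  have hnD : ‖x2 - x1‖ = L := by
    rw [hDeq, norm_mul, Complex.norm_real, hcne, mul_one, Real.norm_eq_abs, abs_of_pos hL]
  have gcont : Continuous (fun t : ℝ => f (x1 + (t:ℂ) * (x2 - x1))) :=
    hf.comp (continuous_const.add (Complex.continuous_ofReal.mul continuous_const))
  have hx1x2ne : x1 ≠ x2 := by
    rw [hx2e]; exact (move_ne (ne_of_gt hL) hconjne).symm
  have hx2sq' : 0 ≤ x2.im → x2 ∈ sqSet := fun h =>
    mem_sqSet_iff.mpr ⟨by rw [h2re]; norm_num, le_of_eq h2re, h, le_of_lt h2im⟩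
  have hx1sq' : 0 ≤ x1.re → x1 ∈ sqSet := fun h =>
    mem_sqSet_iff.mpr ⟨h, le_of_lt h1re, by rw [h1im]; norm_num, le_of_eq h1im⟩
  by_cases hc : 0 < x1.re <;> by_cases he : 0 < x2.im
  · -- COMBO 1 : 0 < x1.re, 0 < x2.im : three-segment broken ray
    obtain ⟨sI, hsI0, hsIneg', hIa, hIb, hIc, hId, hIdisj, hIvan⟩ :=
      entry_exists hα hβ (le_of_lt hc) h1re
    have hsIneg : sI < 0 := hsIneg' hc
    obtain ⟨sO, hsO0, hsOpos', hOa, hOb, hOc, hOd, hOdisj, hOvan⟩ :=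
      exit_exists hα hβ (le_of_lt he) h2im
    have hsOpos : 0 < sO := hsOpos' he
    set A := x1 + (sI:ℂ) * d0 with hA
    set B := x2 + (sO:ℂ) * (-d0) with hB
    have hAsq : A ∈ sqSet := by
      rw [hA, mem_sqSet_iff, line_re, line_im, h1im]
      exact ⟨hIa, hIb, hIc, hId⟩
    have hBsq : B ∈ sqSet := by
      rw [hB, mem_sqSet_iff, line_re, line_im, Complex.neg_re, Complex.neg_im, h2re]
      refine ⟨by linarith, by linarith, by linarith, by linarith⟩
    have hx1sq : x1 ∈ sqSet := hx1sq' (le_of_lt hc)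
    have hx2sq : x2 ∈ sqSet := hx2sq' (le_of_lt he)
    have I1 : ∫ t in Set.Iic (0:ℝ), f (x1 + (t:ℂ) * d0)
        = ∫ t in sI..(0:ℝ), f (x1 + (t:ℂ) * d0) := by
      apply integral_Iic_trunc (lineIntegrable hf hb x1 d0 hd0) hsI0
      intro t ht
      rcases hIvan t ht with hvv | hvv
      · exact fzero _ (Or.inl (by rw [line_re]; linarith))
      · exact fzero _ (Or.inr (Or.inr (Or.inl (by rw [line_im, h1im]; linarith))))
    have R1 := seg_reparam f hd0 hsI0 hA
      (show x1 = x1 + ((0:ℝ):ℂ) * d0 by push_cast; ring)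
    have I3 : ∫ t in Set.Ici (0:ℝ), f (x2 + (t:ℂ) * (-d0))
        = ∫ t in (0:ℝ)..sO, f (x2 + (t:ℂ) * (-d0)) := by
      apply integral_Ici_trunc (lineIntegrable hf hb x2 (-d0) hnm) hsO0
      intro t ht
      rcases hOvan t ht with hvv | hvv
      · exact fzero _ (Or.inl (by rw [line_re, Complex.neg_re, h2re]; linarith))
      · exact fzero _ (Or.inr (Or.inr (Or.inl (by rw [line_im, Complex.neg_im]; linarith))))
    have R3 := seg_reparam f hnm hsO0
      (show x2 = x2 + ((0:ℝ):ℂ) * (-d0) by push_cast; ring) hB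
    set X : ℕ → ℂ := fun n => if n = 0 then A else if n = 1 then x1
      else if n = 2 then x2 else B with hX
    have eX0 : X 0 = A := by norm_num [hX]
    have eX1 : X 1 = x1 := by norm_num [hX]
    have eX2 : X 2 = x2 := by norm_num [hX]
    have eX3 : X 3 = B := by norm_num [hX]
    have hx1A : x1 - A = ((-sI : ℝ):ℂ) * d0 := by rw [hA]; push_cast; ring
    have hBx2 : B - x2 = ((sO : ℝ):ℂ) * (-d0) := by rw [hB]; push_cast; ring
    have hBR : IsSquareBR 3 X := by
      refine ⟨by norm_num, ?_, ?_, ?_, ?_, ?_⟩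
      · intro i hi
        interval_cases i
        · rw [eX0, eX1, hA]; exact move_ne (ne_of_lt hsIneg) hd0ne
        · rw [eX1, eX2]; exact hx1x2ne
        · rw [eX2, eX3, hB]; exact (move_ne (ne_of_gt hsOpos) (neg_ne_zero.mpr hd0ne)).symm
      · intro i hi t ht
        interval_cases i
        · rw [eX0, eX1]; exact seg_in_sq hAsq hx1sq t ht
        · rw [eX1, eX2]; exact seg_in_sq hx1sq hx2sq t ht
        · rw [eX2, eX3]; exact seg_in_sq hx2sq hBsq t ht
      · rw [eX0]
        refine mem_sqE_iff.mpr ⟨hAsq, ?_⟩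
        rcases hIdisj with h' | h'
        · left; rw [hA, line_re]; exact h'
        · right; rw [hA, line_im, h1im]; exact h'
      · rw [eX3]
        refine mem_sqE_iff.mpr ⟨hBsq, ?_⟩
        rcases hOdisj with h' | h'
        · left; rw [hB, line_re, Complex.neg_re, h2re]; linarith
        · right; rw [hB, line_im, Complex.neg_im]; linarith
      · intro i hi
        have hii : i = 0 ∨ i = 1 := by omega
        rcases hii with rfl | rfl
        · right
          rw [show (0:ℕ)+1 = 1 from rfl, show (0:ℕ)+2 = 2 from rfl, eX0, eX1, eX2]
          refine ⟨h1im, ?_⟩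
          rw [hDeq, hx1A, unit_smul hL hcne, unit_smul (by linarith : (0:ℝ) < -sI) hd0]
        · left
          rw [show (1:ℕ)+1 = 2 from rfl, show (1:ℕ)+2 = 3 from rfl, eX1, eX2, eX3]
          refine ⟨h2re, ?_⟩
          rw [hBx2, hDeq, unit_smul hsOpos hnm, unit_smul hL hcne, Complex.conj_conj]
    have hv := hvanish 3 X hBR
    unfold brtSumC at hv
    rw [Finset.sum_range_succ, Finset.sum_range_succ, Finset.sum_range_succ,
      Finset.sum_range_zero] at hv
    rw [show (0:ℕ)+1 = 1 from rfl, show (1:ℕ)+1 = 2 from rfl, show (2:ℕ)+1 = 3 from rfl,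
      eX0, eX1, eX2, eX3] at hv
    rw [I1, R1, I3, R3]
    linarith
  · -- COMBO 3 : 0 < x1.re, x2.im ≤ 0 : two-segment ray through x1
    push_neg at he
    obtain ⟨sI, hsI0, hsIneg', hIa, hIb, hIc, hId, hIdisj, hIvan⟩ :=
      entry_exists hα hβ (le_of_lt hc) h1re
    have hsIneg : sI < 0 := hsIneg' hc
    set A := x1 + (sI:ℂ) * d0 with hA
    have hAsq : A ∈ sqSet := by
      rw [hA, mem_sqSet_iff, line_re, line_im, h1im]
      exact ⟨hIa, hIb, hIc, hId⟩
    have hx1sq : x1 ∈ sqSet := hx1sq' (le_of_lt hc)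
    have I1 : ∫ t in Set.Iic (0:ℝ), f (x1 + (t:ℂ) * d0)
        = ∫ t in sI..(0:ℝ), f (x1 + (t:ℂ) * d0) := by
      apply integral_Iic_trunc (lineIntegrable hf hb x1 d0 hd0) hsI0
      intro t ht
      rcases hIvan t ht with hvv | hvv
      · exact fzero _ (Or.inl (by rw [line_re]; linarith))
      · exact fzero _ (Or.inr (Or.inr (Or.inl (by rw [line_im, h1im]; linarith))))
    have R1 := seg_reparam f hd0 hsI0 hA
      (show x1 = x1 + ((0:ℝ):ℂ) * d0 by push_cast; ring)
    have Z3 : ∫ t in Set.Ici (0:ℝ), f (x2 + (t:ℂ) * (-d0)) = 0 := by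
      apply integral_Ici_zero'
      intro t ht
      apply fzero
      right; right; left
      rw [line_im, Complex.neg_im]
      have hm : 0 < t * d0.im := mul_pos ht hβ
      have h2 : t * -d0.im = -(t * d0.im) := by ring
      rw [h2]
      linarith
    set s1 : ℝ := 1 / (1 - x2.im) with hs1
    have h1e : 0 < 1 - x2.im := by linarith
    have hs1pos : 0 < s1 := by rw [hs1]; positivity
    have hs1le : s1 ≤ 1 := by rw [hs1, div_le_one h1e]; linarith
    have him_s1 : 1 + s1 * (x2.im - 1) = 0 := by
      rw [hs1]; field_simp; ring
    set B := x1 + (s1:ℂ) * (x2 - x1) with hB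
    have hBim : B.im = 0 := by rw [hB, line_im, hDsubim, h1im]; exact him_s1
    have hBre : B.re = x1.re + s1 * (1 - x1.re) := by rw [hB, line_re, hDsubre]
    have hBsq : B ∈ sqSet := by
      rw [mem_sqSet_iff, hBim, hBre]
      refine ⟨by nlinarith, by nlinarith, le_rfl, by norm_num⟩
    have Tm : ∫ t in (0:ℝ)..1, f (x1 + (t:ℂ) * (x2 - x1))
        = ∫ t in (0:ℝ)..s1, f (x1 + (t:ℂ) * (x2 - x1)) := by
      apply interval_trunc gcont le_rfl (le_of_lt hs1pos) hs1le
      · intro t ht0 hts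
        exact absurd ht0 (not_le.mpr hts)
      · intro t hts ht1
        apply fzero
        right; right; left
        rw [line_im, hDsubim, h1im]
        nlinarith
    have Rm := seg_sub_reparam f x1 (x2 - x1) (le_of_lt hs1pos)
    rw [show x1 + ((0:ℝ):ℂ) * (x2 - x1) = x1 by push_cast; ring, ← hB] at Rm
    have hBx1 : B - x1 = ((s1 * L : ℝ):ℂ) * (starRingEnd ℂ) d0 := by
      rw [hB, hDeq]; push_cast; ring
    have hs1L : 0 < s1 * L := mul_pos hs1pos hL
    have hnB : ‖B - x1‖ = s1 * L := by
      rw [hBx1, norm_mul, Complex.norm_real, hcne, mul_one, Real.norm_eq_abs,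
        abs_of_pos hs1L]
    have hx1A : x1 - A = ((-sI : ℝ):ℂ) * d0 := by rw [hA]; push_cast; ring
    set X : ℕ → ℂ := fun n => if n = 0 then A else if n = 1 then x1 else B with hX
    have eX0 : X 0 = A := by norm_num [hX]
    have eX1 : X 1 = x1 := by norm_num [hX]
    have eX2 : X 2 = B := by norm_num [hX]
    have hBR : IsSquareBR 2 X := by
      refine ⟨one_le_two, ?_, ?_, ?_, ?_, ?_⟩
      · intro i hi
        interval_cases i
        · rw [eX0, eX1, hA]; exact move_ne (ne_of_lt hsIneg) hd0ne
        · rw [eX1, eX2, show B = x1 + ((s1 * L : ℝ):ℂ) * (starRingEnd ℂ) d0 by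
            rw [← hBx1]; ring]
          exact (move_ne (ne_of_gt hs1L) hconjne).symm
      · intro i hi t ht
        interval_cases i
        · rw [eX0, eX1]; exact seg_in_sq hAsq hx1sq t ht
        · rw [eX1, eX2]; exact seg_in_sq hx1sq hBsq t ht
      · rw [eX0]
        refine mem_sqE_iff.mpr ⟨hAsq, ?_⟩
        rcases hIdisj with h' | h'
        · left; rw [hA, line_re]; exact h'
        · right; rw [hA, line_im, h1im]; exact h'
      · rw [eX2]
        exact mem_sqE_iff.mpr ⟨hBsq, Or.inr hBim⟩
      · intro i hi
        have hii : i = 0 := by omega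
        subst hii
        right
        rw [show (0:ℕ)+1 = 1 from rfl, show (0:ℕ)+2 = 2 from rfl, eX0, eX1, eX2]
        refine ⟨h1im, ?_⟩
        rw [hBx1, hx1A, unit_smul hs1L hcne, unit_smul (by linarith : (0:ℝ) < -sI) hd0]
    have hv := hvanish 2 X hBR
    unfold brtSumC at hv
    rw [Finset.sum_range_succ, Finset.sum_range_succ, Finset.sum_range_zero] at hv
    rw [show (0:ℕ)+1 = 1 from rfl, show (1:ℕ)+1 = 2 from rfl, eX0, eX1, eX2] at hv
    rw [I1, R1, Tm, Rm, Z3]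
    have key : ‖x2 - x1‖ * ((s1 - 0) * ∫ s in (0:ℝ)..1, f (x1 + (s:ℂ) * (B - x1)))
        = ‖B - x1‖ * ∫ s in (0:ℝ)..1, f (x1 + (s:ℂ) * (B - x1)) := by
      rw [hnD, hnB]; ring
    linarith
  · -- COMBO 2 : x1.re ≤ 0, 0 < x2.im : two-segment ray through x2
    push_neg at hc
    obtain ⟨sO, hsO0, hsOpos', hOa, hOb, hOc, hOd, hOdisj, hOvan⟩ :=
      exit_exists hα hβ (le_of_lt he) h2im
    have hsOpos : 0 < sO := hsOpos' he
    obtain ⟨B, hB⟩ : ∃ b : ℂ, b = x2 + (sO:ℂ) * (-d0) := ⟨_, rfl⟩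
    have hBsq : B ∈ sqSet := by
      rw [hB, mem_sqSet_iff, line_re, line_im, Complex.neg_re, Complex.neg_im, h2re]
      refine ⟨by linarith, by linarith, by linarith, by linarith⟩
    have hx2sq : x2 ∈ sqSet := hx2sq' (le_of_lt he)
    have Z1 : ∫ t in Set.Iic (0:ℝ), f (x1 + (t:ℂ) * d0) = 0 := by
      apply integral_Iic_zero'
      intro t ht
      apply fzero
      left
      rw [line_re]
      have hm : t * d0.re < 0 := mul_neg_of_neg_of_pos ht hα
      linarith
    have I3 : ∫ t in Set.Ici (0:ℝ), f (x2 + (t:ℂ) * (-d0))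
        = ∫ t in (0:ℝ)..sO, f (x2 + (t:ℂ) * (-d0)) := by
      apply integral_Ici_trunc (lineIntegrable hf hb x2 (-d0) hnm) hsO0
      intro t ht
      rcases hOvan t ht with hvv | hvv
      · exact fzero _ (Or.inl (by rw [line_re, Complex.neg_re, h2re]; linarith))
      · exact fzero _ (Or.inr (Or.inr (Or.inl (by rw [line_im, Complex.neg_im]; linarith))))
    have R3 := seg_reparam f hnm hsO0
      (show x2 = x2 + ((0:ℝ):ℂ) * (-d0) by push_cast; ring) hB
    obtain ⟨s0, hs0⟩ : ∃ s : ℝ, s = -x1.re / (1 - x1.re) := ⟨_, rfl⟩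
    have h1c : 0 < 1 - x1.re := by linarith
    have hs0a : 0 ≤ s0 := by
      rw [hs0]; exact div_nonneg (by linarith) (by linarith)
    have hs0b : s0 < 1 := by rw [hs0, div_lt_one h1c]; linarith
    have hre_s0 : x1.re + s0 * (1 - x1.re) = 0 := by
      rw [hs0]; field_simp; ring
    obtain ⟨A, hA⟩ : ∃ a : ℂ, a = x1 + (s0:ℂ) * (x2 - x1) := ⟨_, rfl⟩
    have hAre : A.re = 0 := by rw [hA, line_re, hDsubre]; exact hre_s0
    have hAim : A.im = 1 + s0 * (x2.im - 1) := by rw [hA, line_im, hDsubim, h1im]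
    have hAsq : A ∈ sqSet := by
      rw [mem_sqSet_iff, hAre, hAim]
      refine ⟨le_rfl, by norm_num, ?_, ?_⟩
      · have hexp : s0 * (x2.im - 1) = s0 * x2.im - s0 := by ring
        have h1 : 0 ≤ s0 * x2.im := mul_nonneg hs0a (le_of_lt he)
        linarith
      · have h2 : 0 ≤ s0 * (1 - x2.im) := mul_nonneg hs0a (by linarith)
        have hexp2 : s0 * (x2.im - 1) = -(s0 * (1 - x2.im)) := by ring
        linarith
    have Tm : ∫ t in (0:ℝ)..1, f (x1 + (t:ℂ) * (x2 - x1))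
        = ∫ t in s0..(1:ℝ), f (x1 + (t:ℂ) * (x2 - x1)) := by
      apply interval_trunc gcont hs0a (le_of_lt hs0b) le_rfl
      · intro t ht0 hts
        apply fzero
        left
        rw [line_re, hDsubre]
        nlinarith
      · intro t hts ht1
        exact absurd hts (not_lt.mpr ht1)
    have Rm := seg_sub_reparam f x1 (x2 - x1) (le_of_lt hs0b)
    rw [show x1 + ((1:ℝ):ℂ) * (x2 - x1) = x2 by push_cast; ring, ← hA] at Rm
    have hx2A : x2 - A = (((1 - s0) * L : ℝ):ℂ) * (starRingEnd ℂ) d0 := by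
      rw [hA, hDeq, hx2e]; push_cast; ring
    have h1s0L : 0 < (1 - s0) * L := mul_pos (by linarith) hL
    have hnA : ‖x2 - A‖ = (1 - s0) * L := by
      rw [hx2A, norm_mul, Complex.norm_real, hcne, mul_one, Real.norm_eq_abs,
        abs_of_pos h1s0L]
    have hBx2 : B - x2 = ((sO : ℝ):ℂ) * (-d0) := by rw [hB]; push_cast; ring
    set X : ℕ → ℂ := fun n => if n = 0 then A else if n = 1 then x2 else B with hX
    have eX0 : X 0 = A := by norm_num [hX]
    have eX1 : X 1 = x2 := by norm_num [hX]
    have eX2 : X 2 = B := by norm_num [hX]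
    have hBR : IsSquareBR 2 X := by
      refine ⟨one_le_two, ?_, ?_, ?_, ?_, ?_⟩
      · intro i hi
        interval_cases i
        · rw [eX0, eX1, show x2 = A + (((1 - s0) * L : ℝ):ℂ) * (starRingEnd ℂ) d0 by
            rw [← hx2A]; ring]
          exact (move_ne (ne_of_gt h1s0L) hconjne).symm
        · rw [eX1, eX2, hB]
          exact (move_ne (ne_of_gt hsOpos) (neg_ne_zero.mpr hd0ne)).symm
      · intro i hi t ht
        interval_cases i
        · rw [eX0, eX1]; exact seg_in_sq hAsq hx2sq t ht
        · rw [eX1, eX2]; exact seg_in_sq hx2sq hBsq t ht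
      · rw [eX0]
        exact mem_sqE_iff.mpr ⟨hAsq, Or.inl hAre⟩
      · rw [eX2]
        refine mem_sqE_iff.mpr ⟨hBsq, ?_⟩
        rcases hOdisj with h' | h'
        · left; rw [hB, line_re, Complex.neg_re, h2re]; linarith
        · right; rw [hB, line_im, Complex.neg_im]; linarith
      · intro i hi
        have hii : i = 0 := by omega
        subst hii
        left
        rw [show (0:ℕ)+1 = 1 from rfl, show (0:ℕ)+2 = 2 from rfl, eX0, eX1, eX2]
        refine ⟨h2re, ?_⟩
        rw [hBx2, hx2A, unit_smul hsOpos hnm, unit_smul h1s0L hcne, Complex.conj_conj]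
    have hv := hvanish 2 X hBR
    unfold brtSumC at hv
    rw [Finset.sum_range_succ, Finset.sum_range_succ, Finset.sum_range_zero] at hv
    rw [show (0:ℕ)+1 = 1 from rfl, show (1:ℕ)+1 = 2 from rfl, eX0, eX1, eX2] at hv
    rw [Z1, Tm, Rm, I3, R3]
    have key : ‖x2 - x1‖ * ((1 - s0) * ∫ s in (0:ℝ)..1, f (A + (s:ℂ) * (x2 - A)))
        = ‖x2 - A‖ * ∫ s in (0:ℝ)..1, f (A + (s:ℂ) * (x2 - A)) := by
      rw [hnD, hnA]; ring
    linarith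
  · -- COMBO 4 : x1.re ≤ 0, x2.im ≤ 0 : chord or empty
    push_neg at hc
    push_neg at he
    have Z1 : ∫ t in Set.Iic (0:ℝ), f (x1 + (t:ℂ) * d0) = 0 := by
      apply integral_Iic_zero'
      intro t ht
      apply fzero
      left
      rw [line_re]
      have hm : t * d0.re < 0 := mul_neg_of_neg_of_pos ht hα
      linarith
    have Z3 : ∫ t in Set.Ici (0:ℝ), f (x2 + (t:ℂ) * (-d0)) = 0 := by
      apply integral_Ici_zero'
      intro t ht
      apply fzero
      right; right; left
      rw [line_im, Complex.neg_im]
      have hm : 0 < t * d0.im := mul_pos ht hβ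
      have h2 : t * -d0.im = -(t * d0.im) := by ring
      rw [h2]
      linarith
    obtain ⟨s0, hs0⟩ : ∃ s : ℝ, s = -x1.re / (1 - x1.re) := ⟨_, rfl⟩
    have h1c : 0 < 1 - x1.re := by linarith
    have hs0a : 0 ≤ s0 := by
      rw [hs0]; exact div_nonneg (by linarith) (by linarith)
    have hs0b : s0 < 1 := by rw [hs0, div_lt_one h1c]; linarith
    have hre_s0 : x1.re + s0 * (1 - x1.re) = 0 := by
      rw [hs0]; field_simp; ring
    obtain ⟨s1, hs1⟩ : ∃ s : ℝ, s = 1 / (1 - x2.im) := ⟨_, rfl⟩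
    have h1e : 0 < 1 - x2.im := by linarith
    have hs1pos : 0 < s1 := by rw [hs1]; positivity
    have hs1le : s1 ≤ 1 := by rw [hs1, div_le_one h1e]; linarith
    have him_s1 : 1 + s1 * (x2.im - 1) = 0 := by
      rw [hs1]; field_simp; ring
    by_cases hss : s0 < s1
    · obtain ⟨A, hA⟩ : ∃ a : ℂ, a = x1 + (s0:ℂ) * (x2 - x1) := ⟨_, rfl⟩
      obtain ⟨B, hB⟩ : ∃ b : ℂ, b = x1 + (s1:ℂ) * (x2 - x1) := ⟨_, rfl⟩
      have hAre : A.re = 0 := by rw [hA, line_re, hDsubre]; exact hre_s0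
      have hAim : A.im = 1 + s0 * (x2.im - 1) := by rw [hA, line_im, hDsubim, h1im]
      have hBim : B.im = 0 := by rw [hB, line_im, hDsubim, h1im]; exact him_s1
      have hBre : B.re = x1.re + s1 * (1 - x1.re) := by rw [hB, line_re, hDsubre]
      have hAsq : A ∈ sqSet := by
        rw [mem_sqSet_iff, hAre, hAim]
        refine ⟨le_rfl, by norm_num, by nlinarith, by nlinarith⟩
      have hBsq : B ∈ sqSet := by
        rw [mem_sqSet_iff, hBim, hBre]
        refine ⟨by nlinarith, by nlinarith, le_rfl, by norm_num⟩
      have Tm : ∫ t in (0:ℝ)..1, f (x1 + (t:ℂ) * (x2 - x1))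
          = ∫ t in s0..s1, f (x1 + (t:ℂ) * (x2 - x1)) := by
        apply interval_trunc gcont hs0a (le_of_lt hss) hs1le
        · intro t ht0 hts
          apply fzero
          left
          rw [line_re, hDsubre]
          nlinarith
        · intro t hts ht1
          apply fzero
          right; right; left
          rw [line_im, hDsubim, h1im]
          nlinarith
      have Rm := seg_sub_reparam f x1 (x2 - x1) (le_of_lt hss)
      rw [← hA, ← hB] at Rm
      have hBA : B - A = (((s1 - s0) * L : ℝ):ℂ) * (starRingEnd ℂ) d0 := by
        rw [hA, hB, hDeq]; push_cast; ring
      have hssL : 0 < (s1 - s0) * L := mul_pos (by linarith) hL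
      have hnBA : ‖B - A‖ = (s1 - s0) * L := by
        rw [hBA, norm_mul, Complex.norm_real, hcne, mul_one, Real.norm_eq_abs,
          abs_of_pos hssL]
      set X : ℕ → ℂ := fun n => if n = 0 then A else B with hX
      have eX0 : X 0 = A := by norm_num [hX]
      have eX1 : X 1 = B := by norm_num [hX]
      have hBR : IsSquareBR 1 X := by
        refine ⟨le_rfl, ?_, ?_, ?_, ?_, ?_⟩
        · intro i hi
          have hii : i = 0 := by omega
          subst hii
          rw [eX0, eX1, show B = A + (((s1 - s0) * L : ℝ):ℂ) * (starRingEnd ℂ) d0 by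
            rw [← hBA]; ring]
          exact (move_ne (ne_of_gt hssL) hconjne).symm
        · intro i hi t ht
          have hii : i = 0 := by omega
          subst hii
          rw [eX0, eX1]; exact seg_in_sq hAsq hBsq t ht
        · rw [eX0]; exact mem_sqE_iff.mpr ⟨hAsq, Or.inl hAre⟩
        · rw [eX1]; exact mem_sqE_iff.mpr ⟨hBsq, Or.inr hBim⟩
        · intro i hi
          omega
      have hv := hvanish 1 X hBR
      unfold brtSumC at hv
      rw [Finset.sum_range_succ, Finset.sum_range_zero] at hv
      rw [show (0:ℕ)+1 = 1 from rfl, eX0, eX1] at hv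
      rw [Z1, Tm, Rm, Z3]
      have key : ‖x2 - x1‖ * ((s1 - s0) * ∫ s in (0:ℝ)..1, f (A + (s:ℂ) * (B - A)))
          = ‖B - A‖ * ∫ s in (0:ℝ)..1, f (A + (s:ℂ) * (B - A)) := by
        rw [hnD, hnBA]; ring
      linarith
    · -- the line misses the square
      push_neg at hss
      have Tm : ∫ t in (0:ℝ)..1, f (x1 + (t:ℂ) * (x2 - x1))
          = ∫ t in s1..s1, f (x1 + (t:ℂ) * (x2 - x1)) := by
        apply interval_trunc gcont (le_of_lt hs1pos) le_rfl hs1le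
        · intro t ht0 hts
          apply fzero
          left
          rw [line_re, hDsubre]
          nlinarith
        · intro t hts ht1
          apply fzero
          right; right; left
          rw [line_im, hDsubim, h1im]
          nlinarith
      rw [Z1, Z3, Tm, intervalIntegral.integral_same]
      ring


lemma caseVH {f : ℂ → ℝ} (hf : Continuous f) (hsupp : ∀ z, f z ≠ 0 → z ∈ sqSet)
    (hvanish : ∀ (N : ℕ) (x : ℕ → ℂ), IsSquareBR N x → brtSumC f N x = 0)
    {x1 x2 d0 : ℂ} (h1re : x1.re = 1) (h1im : x1.im < 1)
    (h2im : x2.im = 1) (h2re : x2.re < 1)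
    (hα : 0 < d0.re) (hβ : 0 < d0.im) (hd0 : ‖d0‖ = 1)
    (hx2 : ∃ L : ℝ, 0 < L ∧ x2 = x1 + (L:ℂ) * (-(starRingEnd ℂ) d0)) :
    (∫ t in Set.Iic (0:ℝ), f (x1 + (t:ℂ) * d0))
      + ‖x2 - x1‖ * (∫ t in (0:ℝ)..1, f (x1 + (t:ℂ) * (x2 - x1)))
      + (∫ t in Set.Ici (0:ℝ), f (x2 + (t:ℂ) * (-d0))) = 0 := by
  obtain ⟨L, hL, hx2⟩ := hx2
  have hx2' : sigmaC x2 = sigmaC x1 + (L:ℂ) * (starRingEnd ℂ) (sigmaC d0) := by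
    rw [hx2, sC_add, sC_rsmul, sC_neg, sC_conj, neg_neg]
  have h := caseHV (sigma_cont hf) (sigma_supp hsupp) (vanish_sigma hvanish)
    (x1 := sigmaC x1) (x2 := sigmaC x2) (d0 := sigmaC d0)
    (by rw [sC_im]; exact h1re) (by rw [sC_re]; exact h1im)
    (by rw [sC_re]; exact h2im) (by rw [sC_im]; exact h2re)
    (by rw [sC_re]; exact hβ) (by rw [sC_im]; exact hα)
    (by rw [sC_norm]; exact hd0) ⟨L, hL, hx2'⟩
  have E1 : ∫ t in Set.Iic (0:ℝ), f (x1 + (t:ℂ) * d0)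
      = ∫ t in Set.Iic (0:ℝ), f (sigmaC (sigmaC x1 + (t:ℂ) * sigmaC d0)) := by
    apply setIntegral_congr_fun measurableSet_Iic
    intro t _
    show f (x1 + (t:ℂ) * d0) = f (sigmaC (sigmaC x1 + (t:ℂ) * sigmaC d0))
    congr 1
    rw [sC_add, sC_rsmul, sC_invol, sC_invol]
  have E3 : ∫ t in Set.Ici (0:ℝ), f (x2 + (t:ℂ) * (-d0))
      = ∫ t in Set.Ici (0:ℝ), f (sigmaC (sigmaC x2 + (t:ℂ) * (-sigmaC d0))) := by
    apply setIntegral_congr_fun measurableSet_Ici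
    intro t _
    show f (x2 + (t:ℂ) * (-d0)) = f (sigmaC (sigmaC x2 + (t:ℂ) * (-sigmaC d0)))
    congr 1
    rw [show -sigmaC d0 = sigmaC (-d0) by rw [sC_neg], sC_add, sC_rsmul, sC_invol, sC_invol]
  have E2 : ‖x2 - x1‖ * (∫ t in (0:ℝ)..1, f (x1 + (t:ℂ) * (x2 - x1)))
      = ‖sigmaC x2 - sigmaC x1‖
        * ∫ t in (0:ℝ)..1, f (sigmaC (sigmaC x1 + (t:ℂ) * (sigmaC x2 - sigmaC x1))) := by
    have hn : ‖sigmaC x2 - sigmaC x1‖ = ‖x2 - x1‖ := by rw [← sC_sub, sC_norm]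
    rw [hn]
    congr 1
    apply intervalIntegral.integral_congr
    intro t _
    show f (x1 + (t:ℂ) * (x2 - x1)) = f (sigmaC (sigmaC x1 + (t:ℂ) * (sigmaC x2 - sigmaC x1)))
    congr 1
    rw [show sigmaC x2 - sigmaC x1 = sigmaC (x2 - x1) from (sC_sub _ _).symm,
      sC_add, sC_rsmul, sC_invol, sC_invol]
  rw [E1, E2, E3]
  exact h

end Stmt10Aux

/-- if the broken ray transform is injective on continuous compactly
supported functions in every planar cone (of opening angle less than π) with the two
boundary rays reflecting, then the broken ray transform on the unit square with set of
tomography two adjacent sides and the other two sides reflecting is injective. -/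
theorem stmt10
    (hcone : ∀ (p : ℂ) (φ ψ : ℝ), φ < ψ → ψ - φ < Real.pi →
      ∀ f : ℂ → ℝ, Continuous f → HasCompactSupport f →
        (∀ z, f z ≠ 0 → z ∈ coneSet2 p φ ψ) →
        (∀ (N : ℕ) (x d : ℕ → ℂ), IsConeBRMax p φ ψ N x d → brtMax f N x d = 0) →
        ∀ z, f z = 0)
    (f : ℂ → ℝ) (hf : Continuous f) (hsupp : ∀ z, f z ≠ 0 → z ∈ sqSet)
    (hvanish : ∀ (N : ℕ) (x : ℕ → ℂ), IsSquareBR N x → brtSumC f N x = 0) :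
    ∀ z, f z = 0 := by
  intro z
  have hb : ∀ w : ℂ, f w ≠ 0 → ‖w‖ ≤ 2 := fun w hw =>
    Stmt10Aux.sq_bound (Stmt10Aux.mem_sqSet_iff.mp (hsupp w hw))
  have hKf : HasCompactSupport f := by
    apply HasCompactSupport.intro (isCompact_closedBall (0:ℂ) 2)
    intro w hw
    by_contra hne
    exact hw (by simpa [Metric.mem_closedBall, dist_zero_right] using hb w hne)
  refine hcone (1 + Complex.I) Real.pi (3 * Real.pi / 2) (by linarith [Real.pi_pos])
    (by linarith [Real.pi_pos]) f hf hKf ?_ ?_ z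
  · intro w hw
    have h := Stmt10Aux.mem_sqSet_iff.mp (hsupp w hw)
    exact Stmt10Aux.mem_cone_iff.mpr ⟨h.2.1, h.2.2.2⟩
  · intro N x d hBR
    rcases Stmt10Aux.classify hBR with
      ⟨hN1, h1re, h1im, hd0, hd1⟩ | ⟨hN1, h1im, h1re, hd0, hd1⟩ |
      ⟨hN2, h1im, h1re, h2re, h2im, hA, hB, hd0n, hd1, hd2, hx2⟩ |
      ⟨hN2, h1re, h1im, h2im, h2re, hA, hB, hd0n, hd1, hd2, hx2⟩
    · subst hN1
      unfold brtMax
      rw [Finset.Ico_self, Finset.sum_empty, add_zero, hd0, hd1]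
      exact Stmt10Aux.caseV hf hsupp hvanish h1re h1im
    · subst hN1
      unfold brtMax
      rw [Finset.Ico_self, Finset.sum_empty, add_zero, hd0, hd1]
      exact Stmt10Aux.caseH hf hsupp hvanish h1im h1re
    · subst hN2
      unfold brtMax
      rw [show Finset.Ico 1 2 = {1} from rfl, Finset.sum_singleton,
        show (1:ℕ) + 1 = 2 from rfl, hd2]
      refine Stmt10Aux.caseHV hf hsupp hvanish h1im h1re h2re h2im hA hB hd0n ?_
      obtain ⟨L, hL, hh⟩ := hx2
      exact ⟨L, hL, by rw [hh, hd1]⟩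
    · subst hN2
      unfold brtMax
      rw [show Finset.Ico 1 2 = {1} from rfl, Finset.sum_singleton,
        show (1:ℕ) + 1 = 2 from rfl, hd2]
      refine Stmt10Aux.caseVH hf hsupp hvanish h1re h1im h2im h2re hA hB hd0n ?_
      obtain ⟨L, hL, hh⟩ := hx2
      exact ⟨L, hL, by rw [hh, hd1]⟩
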